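/- arXiv:1306.2390 — 2 statements merged into one kernel-verified Lean document; each statement's English description precedes it below -/
import Mathlib

section
/- Fix n ≥ 1 and k ∈ {1, …, n}. Let a₁, …, a_k ∈ ℂ with a_k real and a_k > 0 and |a₁|² + ⋯ + |a_k|² = 1, and suppose the unit acorn A = { z ∈ ℂⁿ : |z₁| + ⋯ + |z_n| < 1 } is contained in the half-space { z ∈ ℂⁿ : Re( a₁ z₁ + ⋯ + a_{k−1} z_{k−1} + a_k (z_k − 1) ) < 0 }. Then |a_ℓ| ≤ a_k for every ℓ = 1, …, k, and consequently a_k ≥ 1/√k ≥ 1/√n. -/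
/-!
Testing the half-space condition on the points `w • ê^ℓ` of the acorn with `|w| < 1` gives
`Re(a_ℓ w) < a_k`; letting `w` tend to `conj(a_ℓ) / |a_ℓ|` yields `|a_ℓ| ≤ a_k`. Summing the
squares then gives `1 = ∑ |a_ℓ|² ≤ k a_k²`.
-/

open Metric Set

open RCLike ComplexConjugate in
theorem norm_le_of_forall_norm_lt_one_re_mul_lt {𝕜 : Type*} [RCLike 𝕜] {a : 𝕜} {c : ℝ}
    (h : ∀ w : 𝕜, ‖w‖ < 1 → re (a * w) < c) : ‖a‖ ≤ c := by
  have h_closedBall : closedBall (0 : 𝕜) 1 ⊆ {w | re (a * w) ≤ c} := by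
    rw [← closure_ball (0 : 𝕜) one_ne_zero]
    exact closure_minimal (fun w hw => (h w (mem_ball_zero_iff.1 hw)).le)
      (isClosed_le (by fun_prop) continuous_const)
  have h_mem : conj a / (‖a‖ : 𝕜) ∈ closedBall (0 : 𝕜) 1 := by
    simpa [norm_div] using div_self_le_one ‖a‖
  calc ‖a‖ = re (a * (conj a / (‖a‖ : 𝕜))) := by
        rw [← mul_div_assoc, mul_conj, ← ofReal_pow, ← ofReal_div, ofReal_re, sq,
          mul_self_div_self]
    _ ≤ c := h_closedBall h_mem

def acorn (ι : Type*) [Fintype ι] : Set (EuclideanSpace ℂ ι) := {z | ∑ i, ‖z i‖ < 1}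

theorem single_mem_acorn {ι : Type*} [Fintype ι] [DecidableEq ι] (i : ι) {w : ℂ}
    (hw : ‖w‖ < 1) : EuclideanSpace.single i w ∈ acorn ι := by
  simpa [acorn, PiLp.single_apply, apply_ite] using hw

theorem norm_le_of_acorn_subset {ι κ : Type*} [Fintype ι] [Fintype κ] (e : ι ↪ κ) (a : ι → ℂ)
    {c : ℝ} (h : acorn κ ⊆ {z | (∑ i, a i * z (e i)).re < c}) (i : ι) : ‖a i‖ ≤ c := by
  classical
  refine norm_le_of_forall_norm_lt_one_re_mul_lt fun w hw => ?_
  have h_sum : ∑ j, a j * EuclideanSpace.single (e i) w (e j) = a i * w := by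
    simp [PiLp.single_apply, e.injective.eq_iff]
  simpa only [mem_ofPred_eq, h_sum, RCLike.re_to_complex] using h (single_mem_acorn (e i) hw)

theorem one_div_sqrt_card_le_of_sum_norm_sq_eq_one {ι E : Type*} [Fintype ι]
    [SeminormedAddCommGroup E] {x : ι → E} {c : ℝ} (hsum : ∑ i, ‖x i‖ ^ 2 = 1)
    (hle : ∀ i, ‖x i‖ ≤ c) :
    1 / Real.sqrt (Fintype.card ι) ≤ c := by
  obtain ⟨i, -, -⟩ := Finset.exists_ne_zero_of_sum_ne_zero (hsum ▸ one_ne_zero)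
  have hc : 0 ≤ c := (norm_nonneg _).trans (hle i)
  have h_card : 1 ≤ Fintype.card ι * c ^ 2 := by
    calc (1 : ℝ) = ∑ i, ‖x i‖ ^ 2 := hsum.symm
      _ ≤ ∑ _i : ι, c ^ 2 := by gcongr with i; exact hle i
      _ = Fintype.card ι * c ^ 2 := by simp
  have h_pos : 0 < Real.sqrt (Fintype.card ι) :=
    Real.sqrt_pos.2 (mod_cast Fintype.card_pos_iff.2 ⟨i⟩)
  rw [div_le_iff₀ h_pos]
  calc (1 : ℝ) = Real.sqrt 1 := Real.sqrt_one.symm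
    _ ≤ Real.sqrt (Fintype.card ι * c ^ 2) := Real.sqrt_le_sqrt h_card
    _ = c * Real.sqrt (Fintype.card ι) := by
      rw [Real.sqrt_mul' _ (sq_nonneg c), Real.sqrt_sq hc, mul_comm]

-- The paper's index `k` is `k + 1` here, and `a (Fin.last k)` is the paper's `a_k`.
theorem acorn_halfspace_coefficient_bound_general (n k : ℕ) (hk : k + 1 ≤ n)
    (a : Fin (k + 1) → ℂ)
    (hnorm : ∑ ℓ : Fin (k + 1), ‖a ℓ‖ ^ 2 = 1)
    (hhalf : { z : EuclideanSpace ℂ (Fin n) | ∑ i : Fin n, ‖z i‖ < 1 } ⊆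
      { z : EuclideanSpace ℂ (Fin n) |
        ((∑ ℓ : Fin (k + 1), a ℓ * z (Fin.castLE hk ℓ)) - a (Fin.last k)).re < 0 }) :
    (∀ ℓ : Fin (k + 1), ‖a ℓ‖ ≤ (a (Fin.last k)).re) ∧
    1 / Real.sqrt (k + 1) ≤ (a (Fin.last k)).re ∧
    1 / Real.sqrt n ≤ 1 / Real.sqrt (k + 1) := by
  have h_bound : ∀ ℓ, ‖a ℓ‖ ≤ (a (Fin.last k)).re :=
    norm_le_of_acorn_subset (Fin.castLEEmb hk) a <| hhalf.trans fun z hz => by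
      simpa [sub_neg] using hz
  refine ⟨h_bound, ?_, ?_⟩
  · simpa using one_div_sqrt_card_le_of_sum_norm_sq_eq_one hnorm h_bound
  · gcongr
    exact_mod_cast hk

/-- If the unit acorn `A = { z : |z₁| + ⋯ + |z_n| < 1 }` lies in the
half-space `{ z : Re(a₁ z₁ + ⋯ + a_{k-1} z_{k-1} + a_k (z_k - 1)) < 0 }`, where
`a_k > 0` is real and `|a₁|² + ⋯ + |a_k|² = 1`, then `|a_ℓ| ≤ a_k` for all `ℓ`, and
consequently `a_k ≥ 1/√k ≥ 1/√n`.  (Here the index `k ∈ {1,…,n}` is encoded as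
`k+1` coefficients `a : Fin (k+1) → ℂ` with `k + 1 ≤ n`.) -/
theorem acorn_halfspace_coefficient_bound (n k : ℕ) (hn : 1 ≤ n) (hk : k + 1 ≤ n)
    (a : Fin (k + 1) → ℂ)
    (hreal : (a (Fin.last k)).im = 0) (hpos : 0 < (a (Fin.last k)).re)
    (hnorm : ∑ ℓ : Fin (k + 1), ‖a ℓ‖ ^ 2 = 1)
    (hhalf : { z : EuclideanSpace ℂ (Fin n) | ∑ i : Fin n, ‖z i‖ < 1 } ⊆
      { z : EuclideanSpace ℂ (Fin n) |
        ((∑ ℓ : Fin (k + 1), a ℓ * z (Fin.castLE hk ℓ)) - a (Fin.last k)).re < 0 }) :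
    (∀ ℓ : Fin (k + 1), ‖a ℓ‖ ≤ (a (Fin.last k)).re) ∧
    1 / Real.sqrt (k + 1) ≤ (a (Fin.last k)).re ∧
    1 / Real.sqrt n ≤ 1 / Real.sqrt (k + 1) :=
  acorn_halfspace_coefficient_bound_general n k hk a hnorm hhalf
end

section
/- Let U ⊆ ℂ² be the open 1/10-tubular neighborhood of the circle S = { (e^{it}, 0) : t ∈ ℝ }, i.e., U = { z ∈ ℂ² : dist(z, S) < 1/10 }, and let p = (9/10, 0) ∈ ∂U. Then for every holomorphic automorphism ψ of ℂ² (a bijective holomorphic map ψ : ℂ² → ℂ² with holomorphic inverse), there is no ball B(c, R) ⊆ ℂ² with ψ(U) ⊆ B(c, R) and ‖ψ(p) − c‖ = R. In particular ψ(p) is not a spherically-extreme boundary point of ψ(U) for any ψ ∈ Aut(ℂ²). -/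
open Metric Set

/-- The circle `S = { (e^{it}, 0) : t ∈ ℝ } ⊆ ℂ²`. -/
noncomputable def circleS : Set (EuclideanSpace ℂ (Fin 2)) :=
  { z | ∃ t : ℝ, z = (EuclideanSpace.equiv (Fin 2) ℂ).symm ![Complex.exp (t * Complex.I), 0] }

/-- The open `1/10`-tubular neighborhood `U` of the circle `S`. -/
noncomputable def tubeU : Set (EuclideanSpace ℂ (Fin 2)) :=
  { z | Metric.infDist z circleS < 1 / 10 }

/-- The boundary point `p = (9/10, 0)` of `U`. -/
noncomputable def ptP : EuclideanSpace ℂ (Fin 2) :=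
  (EuclideanSpace.equiv (Fin 2) ℂ).symm ![(9 / 10 : ℂ), 0]

/-!
The analytic disc `w ↦ (w, 0)`, `|w| ≤ 1`, has its boundary circle on `S ⊆ U` and passes
through `p`. By the maximum modulus principle, `‖ψ (w, 0) - c‖` attains its maximum over the
closed disc at a boundary point, where `ψ (w, 0) ∈ ψ(U) ⊆ B(c, R)`; hence `‖ψ p - c‖ < R`.
-/

namespace DiffContOnCl

variable {E F : Type*} [NormedAddCommGroup E] [NormedSpace ℂ E] [Nontrivial E]
  [FiniteDimensional ℂ E] [NormedAddCommGroup F] [NormedSpace ℂ F]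

theorem mapsTo_closure_ball_of_mapsTo_frontier {f : E → F} {U : Set E}
    (hU : Bornology.IsBounded U) (hf : DiffContOnCl ℂ f U) {c : F} {R : ℝ}
    (h : MapsTo f (frontier U) (ball c R)) :
    MapsTo f (closure U) (ball c R) := by
  rcases U.eq_empty_or_nonempty with rfl | hne
  · simp [MapsTo]
  obtain ⟨w, hw, hmax⟩ := Complex.exists_mem_frontier_isMaxOn_norm hU hne (hf.sub_const c)
  intro z hz
  rw [mem_ball, dist_eq_norm]
  calc ‖f z - c‖ ≤ ‖f w - c‖ := hmax hz
    _ < R := by simpa only [mem_ball, dist_eq_norm] using h hw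

end DiffContOnCl

noncomputable def firstAxis (w : ℂ) : EuclideanSpace ℂ (Fin 2) :=
  (EuclideanSpace.equiv (Fin 2) ℂ).symm ![w, 0]

theorem differentiable_firstAxis : Differentiable ℂ firstAxis := by
  have h : Differentiable ℂ (fun w : ℂ => (![w, 0] : Fin 2 → ℂ)) := by
    rw [differentiable_pi]
    intro i
    fin_cases i <;> simp
  exact (EuclideanSpace.equiv (Fin 2) ℂ).symm.differentiable.comp h

theorem firstAxis_mem_circleS {w : ℂ} (hw : w ∈ sphere (0 : ℂ) 1) :
    firstAxis w ∈ circleS := by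
  have hnorm : ‖w‖ = 1 := by simpa using hw
  refine ⟨w.arg, ?_⟩
  have hexp : Complex.exp (w.arg * Complex.I) = w := by
    simpa [hnorm] using Complex.norm_mul_exp_arg_mul_I w
  rw [firstAxis, hexp]

theorem circleS_subset_tubeU : circleS ⊆ tubeU := fun _ hz => by
  simp only [tubeU, mem_ofPred_eq, infDist_zero_of_mem hz]
  norm_num

theorem ptP_eq_firstAxis : ptP = firstAxis (9 / 10) := rfl

theorem no_spherically_extreme_via_automorphism_general
    (ψ : EuclideanSpace ℂ (Fin 2) → EuclideanSpace ℂ (Fin 2))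
    (hψ : Differentiable ℂ ψ) :
    ¬ ∃ (c : EuclideanSpace ℂ (Fin 2)) (R : ℝ), 0 < R ∧
        ψ '' tubeU ⊆ ball c R ∧ ‖ψ ptP - c‖ = R := by
  rintro ⟨c, R, -, hsub, hp⟩
  have hdisc : DiffContOnCl ℂ (ψ ∘ firstAxis) (ball 0 1) :=
    (hψ.comp differentiable_firstAxis).diffContOnCl
  have hboundary : MapsTo (ψ ∘ firstAxis) (frontier (ball 0 1)) (ball c R) := by
    rw [frontier_ball 0 one_ne_zero]
    exact fun w hw => hsub (mem_image_of_mem ψ (circleS_subset_tubeU (firstAxis_mem_circleS hw)))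
  have hp_disc : (9 / 10 : ℂ) ∈ closure (ball 0 1) := by
    rw [closure_ball 0 one_ne_zero, mem_closedBall, dist_zero_right]
    norm_num
  have hinside : (ψ ∘ firstAxis) (9 / 10) ∈ ball c R :=
    hdisc.mapsTo_closure_ball_of_mapsTo_frontier isBounded_ball hboundary hp_disc
  rw [Function.comp_apply, ← ptP_eq_firstAxis, mem_ball, dist_eq_norm] at hinside
  exact hinside.ne hp

/-- For no holomorphic automorphism `ψ` of `ℂ²` is there a ball
`B(c, R)` with `ψ(U) ⊆ B(c, R)` and `‖ψ(p) - c‖ = R`; i.e. `ψ(p)` cannot be made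
spherically-extreme for `ψ(U)` by an automorphism of `ℂ²`. -/
theorem no_spherically_extreme_via_automorphism
    (ψ ψinv : EuclideanSpace ℂ (Fin 2) → EuclideanSpace ℂ (Fin 2))
    (hψ : Differentiable ℂ ψ) (hψinv : Differentiable ℂ ψinv)
    (hleft : Function.LeftInverse ψinv ψ) (hright : Function.RightInverse ψinv ψ) :
    ¬ ∃ (c : EuclideanSpace ℂ (Fin 2)) (R : ℝ), 0 < R ∧
        ψ '' tubeU ⊆ ball c R ∧ ‖ψ ptP - c‖ = R :=
  no_spherically_extreme_via_automorphism_general ψ hψ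
end
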